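/- arXiv:2204.12981 — 2 statements merged into one kernel-verified Lean document; each statement's English description precedes it below -/
import Mathlib

section
/- Let φ : [0,∞) → [0,∞) be monotonically non-increasing and suppose there exist constants α > 0, c > 0 and δ > 1 such that φ(h) ≤ c·(h−k)^(−α)·φ(k)^δ for all real numbers 0 ≤ k < h. Then φ(h) = 0 for all h ≥ t₀, where t₀ := c^(1/α) · φ(0)^((δ−1)/α) · 2^(δ/(δ−1)). -/
/-!
Along the levels `kₙ = t₀ (1 - 2⁻ⁿ)`, which increase to `t₀`, the gaps are `t₀ 2⁻⁽ⁿ⁺¹⁾`, so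
`xₙ = φ kₙ` satisfies the De Giorgi recursion `xₙ₊₁ ≤ C (2^α)ⁿ xₙ^δ` with `C = c (t₀/2)^(-α)`.
The value of `t₀` is exactly the one for which `C φ(0)^δ = r φ(0)` with `r = 2^(-α/(δ-1))`,
and then `xₙ ≤ φ(0) rⁿ` propagates by induction because `2^α r^(δ-1) = 1`.
Since `φ t₀ ≤ xₙ` for every `n` and `r < 1`, `φ t₀ = 0`.
-/

open Real Filter Topology

theorem le_mul_pow_of_le_mul_pow_mul_rpow {x : ℕ → ℝ} {a C B r δ : ℝ} (hx : ∀ n, 0 ≤ x n)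
    (hC : 0 ≤ C) (hB : 0 ≤ B) (hr : 0 < r) (hδ : 0 ≤ δ) (hBr : B * r ^ (δ - 1) ≤ 1)
    (hx₀ : x 0 ≤ a) (ha : C * a ^ δ ≤ r * a) (h_rec : ∀ n, x (n + 1) ≤ C * B ^ n * x n ^ δ)
    (n : ℕ) : x n ≤ a * r ^ n := by
  have ha₀ : 0 ≤ a := (hx 0).trans hx₀
  induction n with
  | zero => simpa using hx₀
  | succ n ih =>
    have h_split : (r ^ n) ^ δ = r ^ n * (r ^ (δ - 1)) ^ n := by
      rw [← rpow_pow_comm hr.le, ← mul_pow, rpow_sub_one hr.ne', mul_div_cancel₀ _ hr.ne']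
    calc x (n + 1) ≤ C * B ^ n * x n ^ δ := h_rec n
      _ ≤ C * B ^ n * (a * r ^ n) ^ δ := by gcongr; exact hx n
      _ = C * a ^ δ * r ^ n * (B * r ^ (δ - 1)) ^ n := by
        rw [mul_rpow ha₀ (by positivity), h_split]; ring
      _ ≤ r * a * r ^ n * 1 := by
        gcongr
        exact pow_le_one₀ (by positivity) hBr
      _ = a * r ^ (n + 1) := by ring

theorem nonpos_of_forall_le_mul_pow {a b r : ℝ} (hr₀ : 0 ≤ r) (hr₁ : r < 1)
    (h : ∀ n : ℕ, a ≤ b * r ^ n) : a ≤ 0 := by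
  have h_lim : Tendsto (fun n : ℕ ↦ b * r ^ n) atTop (𝓝 0) := by
    simpa using (tendsto_pow_atTop_nhds_zero_of_lt_one hr₀ hr₁).const_mul b
  exact ge_of_tendsto' h_lim h

noncomputable def dyadicLevel (d : ℝ) (n : ℕ) : ℝ := d * (1 - 2⁻¹ ^ n)

section DyadicLevel

variable {d : ℝ}

@[simp]
theorem dyadicLevel_zero (d : ℝ) : dyadicLevel d 0 = 0 := by
  simp [dyadicLevel]

theorem dyadicLevel_succ_sub (d : ℝ) (n : ℕ) :
    dyadicLevel d (n + 1) - dyadicLevel d n = d / 2 * 2⁻¹ ^ n := by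
  simp only [dyadicLevel]; ring

theorem dyadicLevel_nonneg (hd : 0 ≤ d) (n : ℕ) : 0 ≤ dyadicLevel d n :=
  mul_nonneg hd (sub_nonneg.2 (pow_le_one₀ (by norm_num) (by norm_num)))

theorem dyadicLevel_le (hd : 0 ≤ d) (n : ℕ) : dyadicLevel d n ≤ d :=
  mul_le_of_le_one_right hd (by simp)

theorem dyadicLevel_lt_succ (hd : 0 < d) (n : ℕ) : dyadicLevel d n < dyadicLevel d (n + 1) := by
  rw [← sub_pos, dyadicLevel_succ_sub]
  exact mul_pos (half_pos hd) (by positivity)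

end DyadicLevel

theorem le_mul_pow_mul_rpow_of_dyadicLevel {φ : ℝ → ℝ} {α c δ : ℝ}
    (hineq : ∀ k h : ℝ, 0 ≤ k → k < h → φ h ≤ c * (h - k) ^ (-α) * (φ k) ^ δ)
    {d : ℝ} (hd : 0 < d) (n : ℕ) :
    φ (dyadicLevel d (n + 1)) ≤ c * (d / 2) ^ (-α) * (2 ^ α) ^ n * φ (dyadicLevel d n) ^ δ := by
  have h_gap : (d / 2 * 2⁻¹ ^ n) ^ (-α) = (d / 2) ^ (-α) * (2 ^ α) ^ n := by
    rw [mul_rpow (half_pos hd).le (by positivity), ← rpow_pow_comm (by norm_num),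
      inv_rpow (by norm_num), ← rpow_neg (by norm_num), neg_neg]
  calc φ (dyadicLevel d (n + 1))
      ≤ c * (dyadicLevel d (n + 1) - dyadicLevel d n) ^ (-α) * φ (dyadicLevel d n) ^ δ :=
        hineq _ _ (dyadicLevel_nonneg hd.le n) (dyadicLevel_lt_succ hd n)
    _ = _ := by rw [dyadicLevel_succ_sub, h_gap]; ring

theorem half_threshold_eq {α c δ a : ℝ} (hα : α ≠ 0) (hδ : δ ≠ 1) (hc : 0 ≤ c) (ha : 0 ≤ a) :
    c ^ (1 / α) * a ^ ((δ - 1) / α) * 2 ^ (δ / (δ - 1)) / 2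
      = (c * a ^ (δ - 1) * 2 ^ (α / (δ - 1))) ^ (1 / α) := by
  have hδ' : δ - 1 ≠ 0 := sub_ne_zero.2 hδ
  rw [mul_rpow (by positivity) (by positivity), mul_rpow hc (by positivity), ← rpow_mul ha,
    ← rpow_mul (by norm_num), mul_div_assoc, ← rpow_sub_one (by norm_num)]
  congr 2 <;> field_simp; ring

theorem threshold_balance {α c δ a : ℝ} (hα : α ≠ 0) (hδ : δ ≠ 1) (hc : 0 < c) (ha : 0 < a) :
    c * (c ^ (1 / α) * a ^ ((δ - 1) / α) * 2 ^ (δ / (δ - 1)) / 2) ^ (-α) * a ^ δ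
      = 2 ^ (-(α / (δ - 1))) * a := by
  rw [half_threshold_eq hα hδ hc.le ha.le, ← rpow_mul (by positivity),
    show 1 / α * -α = -1 by field_simp, rpow_neg_one, rpow_neg (by norm_num),
    rpow_sub_one ha.ne']
  field_simp

/-- Stampacchia's stopping lemma: if `φ : [0,∞) → [0,∞)` is monotonically
non-increasing and `φ h ≤ c * (h - k)^(-α) * (φ k)^δ` for all `0 ≤ k < h`,
then `φ h = 0` for all `h ≥ t₀ := c^(1/α) * (φ 0)^((δ-1)/α) * 2^(δ/(δ-1))`. -/
theorem stampacchia_stopping_lemma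
    (φ : ℝ → ℝ) (α c δ : ℝ)
    (hφ_nonneg : ∀ t : ℝ, 0 ≤ t → 0 ≤ φ t)
    (hφ_mono : ∀ k h : ℝ, 0 ≤ k → k ≤ h → φ h ≤ φ k)
    (hα : 0 < α) (hc : 0 < c) (hδ : 1 < δ)
    (hineq : ∀ k h : ℝ, 0 ≤ k → k < h →
      φ h ≤ c * (h - k) ^ (-α) * (φ k) ^ δ) :
    ∀ h : ℝ, c ^ (1/α) * (φ 0) ^ ((δ - 1)/α) * 2 ^ (δ/(δ - 1)) ≤ h →
      φ h = 0 := by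
  intro h hh
  set t₀ := c ^ (1/α) * (φ 0) ^ ((δ - 1)/α) * 2 ^ (δ/(δ - 1)) with ht₀
  have ht₀_nonneg : 0 ≤ t₀ := mul_nonneg (mul_nonneg (rpow_nonneg hc.le _)
    (rpow_nonneg (hφ_nonneg 0 le_rfl) _)) (rpow_nonneg zero_le_two _)
  have h_nonneg : 0 ≤ h := ht₀_nonneg.trans hh
  refine le_antisymm ?_ (hφ_nonneg h h_nonneg)
  rcases (hφ_nonneg 0 le_rfl).eq_or_lt with hφ0 | hφ0
  · exact hφ0 ▸ hφ_mono 0 h le_rfl h_nonneg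
  set r : ℝ := 2 ^ (-(α / (δ - 1)))
  have hδ₁ : δ - 1 ≠ 0 := (sub_pos.2 hδ).ne'
  have h_balance : 2 ^ α * r ^ (δ - 1) = 1 := by
    rw [← rpow_mul zero_le_two, ← rpow_add two_pos,
      show α + -(α / (δ - 1)) * (δ - 1) = 0 by field_simp; ring, rpow_zero]
  have h_decay (n : ℕ) : φ (dyadicLevel t₀ n) ≤ φ 0 * r ^ n :=
    le_mul_pow_of_le_mul_pow_mul_rpow (fun n ↦ hφ_nonneg _ (dyadicLevel_nonneg ht₀_nonneg n))
      (by positivity) (by positivity) (by positivity) (by linarith) h_balance.le (by simp)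
      (ht₀ ▸ (threshold_balance hα.ne' hδ.ne' hc hφ0).le)
      (le_mul_pow_mul_rpow_of_dyadicLevel hineq (by positivity)) n
  have hr_lt_one : r < 1 := rpow_lt_one_of_one_lt_of_neg one_lt_two (neg_neg_of_pos (by bound))
  exact nonpos_of_forall_le_mul_pow (by positivity) hr_lt_one fun n ↦
    (hφ_mono _ _ (dyadicLevel_nonneg ht₀_nonneg n) ((dyadicLevel_le ht₀_nonneg n).trans hh)).trans
      (h_decay n)
end

section
/- Let φ : [0,∞) → [0,∞) be monotonically non-increasing, let α > 0 and δ > 1, and suppose φ(h) ≤ (h−k)^(−α)·φ(k)^δ for all real numbers 0 ≤ k < h. Set t₀ := φ(0)^((δ−1)/α) · 2^(δ/(δ−1)) and k_m := (1 − 2^(−m))·t₀ for m ∈ ℕ₀. Then φ(k_m) ≤ 2^(−m·α/(δ−1)) · φ(0) for all m ∈ ℕ₀. -/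
/-!
Write `C = φ 0` and `u m = 2^(-mα/(δ-1)) C`. The levels satisfy `k (m+1) - k m = 2^(-(m+1)) t₀`,
and `t₀` is chosen exactly so that `(k (m+1) - k m)^(-α) (u m)^δ = u (m+1)`: the exponents of `C`
and of `2` balance. Hence the decay inequality, applied between consecutive levels, propagates the
bound `φ (k m) ≤ u m` from `m` to `m + 1`. If `C = 0` then `t₀ = 0` and there is nothing to prove.
-/

open Real

theorem apply_le_of_decay_step {φ : ℝ → ℝ} {α δ : ℝ} {k u : ℕ → ℝ}
    (hφ_nonneg : ∀ t, 0 ≤ t → 0 ≤ φ t) (hδ : 0 ≤ δ)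
    (hineq : ∀ a b, 0 ≤ a → a < b → φ b ≤ (b - a) ^ (-α) * φ a ^ δ)
    (hk_nonneg : ∀ m, 0 ≤ k m) (hk_lt : ∀ m, k m < k (m + 1))
    (hu : ∀ m, (k (m + 1) - k m) ^ (-α) * u m ^ δ ≤ u (m + 1))
    (h₀ : φ (k 0) ≤ u 0) : ∀ m, φ (k m) ≤ u m := by
  intro m
  induction m with
  | zero => exact h₀
  | succ m ih =>
    calc φ (k (m + 1)) ≤ (k (m + 1) - k m) ^ (-α) * φ (k m) ^ δ :=
          hineq _ _ (hk_nonneg m) (hk_lt m)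
      _ ≤ (k (m + 1) - k m) ^ (-α) * u m ^ δ := by
          gcongr
          · exact rpow_nonneg (sub_nonneg.2 (hk_lt m).le) _
          · exact hφ_nonneg _ (hk_nonneg m)
      _ ≤ u (m + 1) := hu m

theorem two_rpow_neg_natCast (m : ℕ) : (2 : ℝ) ^ (-(m : ℝ)) = ((2 : ℝ) ^ m)⁻¹ := by
  rw [rpow_neg zero_le_two, rpow_natCast]

theorem one_sub_two_rpow_neg_natCast_nonneg (m : ℕ) : 0 ≤ 1 - (2 : ℝ) ^ (-(m : ℝ)) := by
  rw [two_rpow_neg_natCast, sub_nonneg]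
  exact inv_le_one_of_one_le₀ (one_le_pow₀ one_le_two)

theorem one_sub_two_rpow_neg_succ_sub (m : ℕ) :
    (1 - (2 : ℝ) ^ (-((m + 1 : ℕ) : ℝ))) - (1 - 2 ^ (-(m : ℝ))) = 2 ^ (-((m + 1 : ℕ) : ℝ)) := by
  rw [two_rpow_neg_natCast, two_rpow_neg_natCast, pow_succ]
  field_simp
  ring

theorem rpow_stampacchia_step {b C α δ : ℝ} (x : ℝ) (hb : 0 < b) (hC : 0 < C)
    (hα : α ≠ 0) (hδ : δ ≠ 1) :
    (b ^ (-(x + 1)) * (C ^ ((δ - 1) / α) * b ^ (δ / (δ - 1)))) ^ (-α)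
      * (b ^ (-x * α / (δ - 1)) * C) ^ δ
      = b ^ (-(x + 1) * α / (δ - 1)) * C := by
  have hδ₁ : δ - 1 ≠ 0 := sub_ne_zero.2 hδ
  refine (exp_log (by positivity)).symm.trans (Eq.trans ?_ (exp_log (by positivity)))
  congr 1
  rw [log_mul (by positivity) (by positivity), log_rpow (by positivity), log_rpow (by positivity),
    log_mul (by positivity) (by positivity), log_mul (by positivity) (by positivity),
    log_mul (by positivity) (by positivity), log_mul (by positivity) (by positivity),
    log_rpow hb, log_rpow hb, log_rpow hC, log_rpow hb, log_rpow hb]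
  field_simp
  ring

theorem stampacchia_induction_estimate_general
    (φ : ℝ → ℝ) (α δ : ℝ)
    (hφ_nonneg : ∀ t : ℝ, 0 ≤ t → 0 ≤ φ t)
    (hα : 0 < α) (hδ : 1 < δ)
    (hineq : ∀ k h : ℝ, 0 ≤ k → k < h →
      φ h ≤ (h - k) ^ (-α) * (φ k) ^ δ)
    (t₀ : ℝ) (ht₀ : t₀ = (φ 0) ^ ((δ - 1)/α) * 2 ^ (δ/(δ - 1))) :
    ∀ m : ℕ, φ ((1 - 2 ^ (-(m : ℝ))) * t₀) ≤ 2 ^ (-(m : ℝ) * α / (δ - 1)) * φ 0 := by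
  rcases (hφ_nonneg 0 le_rfl).eq_or_lt' with hC | hC
  · have ht₀_zero : t₀ = 0 := by rw [ht₀, hC, zero_rpow (div_pos (sub_pos.2 hδ) hα).ne', zero_mul]
    simp [ht₀_zero, hC]
  have ht₀_pos : 0 < t₀ := by rw [ht₀]; positivity
  refine apply_le_of_decay_step hφ_nonneg (by linarith) hineq
    (fun m => mul_nonneg (one_sub_two_rpow_neg_natCast_nonneg m) ht₀_pos.le) (fun m => ?_)
    (fun m => ?_) (by simp)
  · rw [← sub_pos, ← sub_mul, one_sub_two_rpow_neg_succ_sub]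
    positivity
  · rw [← sub_mul, one_sub_two_rpow_neg_succ_sub, ht₀]
    push_cast
    exact (rpow_stampacchia_step _ two_pos hC hα.ne' hδ.ne').le

/-- The induction estimate in the proof of Stampacchia's stopping lemma
(normalized case `c = 1`): with `t₀ := (φ 0)^((δ-1)/α) * 2^(δ/(δ-1))` and
`k_m := (1 - 2^(-m)) * t₀` one has `φ (k_m) ≤ 2^(-m·α/(δ-1)) * φ 0`. -/
theorem stampacchia_induction_estimate
    (φ : ℝ → ℝ) (α δ : ℝ)
    (hφ_nonneg : ∀ t : ℝ, 0 ≤ t → 0 ≤ φ t)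
    (hφ_mono : ∀ k h : ℝ, 0 ≤ k → k ≤ h → φ h ≤ φ k)
    (hα : 0 < α) (hδ : 1 < δ)
    (hineq : ∀ k h : ℝ, 0 ≤ k → k < h →
      φ h ≤ (h - k) ^ (-α) * (φ k) ^ δ)
    (t₀ : ℝ) (ht₀ : t₀ = (φ 0) ^ ((δ - 1)/α) * 2 ^ (δ/(δ - 1))) :
    ∀ m : ℕ, φ ((1 - 2 ^ (-(m : ℝ))) * t₀) ≤ 2 ^ (-(m : ℝ) * α / (δ - 1)) * φ 0 :=
  stampacchia_induction_estimate_general φ α δ hφ_nonneg hα hδ hineq t₀ ht₀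
end
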